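/- arXiv:0906.0615 — 6 statements merged into one kernel-verified Lean document; each statement's English description precedes it below -/
import Mathlib

section
/- Let V be a finitely generated ℤ-module and U, W submodules of V. If U + tV = W + tV for all positive integers t, then U = W. -/
lemma int_dvd_all_eq_zero (c : ℤ) (h : ∀ t : ℤ, 0 < t → t ∣ c) : c = 0 :=
  Int.eq_zero_of_abs_lt_dvd (h (|c| + 1) (by positivity)) (by omega)

lemma key_div_zero {Q : Type*} [AddCommGroup Q] [Module.Finite ℤ Q] (x : Q)
    (hx : ∀ t : ℤ, 0 < t → ∃ y : Q, t • y = x) : x = 0 := by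
  classical
  set T := Submodule.torsion ℤ Q with hT
  haveI : Module.Free ℤ (Q ⧸ T) := Module.free_of_finite_type_torsion_free'
  let b := Module.Free.chooseBasis ℤ (Q ⧸ T)
  -- Step 1 : the image of x in Q ⧸ T is zero
  have hmk : T.mkQ x = 0 := by
    have hcoord : ∀ i, b.repr (T.mkQ x) i = 0 := by
      intro i
      apply int_dvd_all_eq_zero
      intro t ht
      obtain ⟨y, hy⟩ := hx t ht
      refine ⟨b.repr (T.mkQ y) i, ?_⟩
      have h1 : (t : ℤ) • T.mkQ y = T.mkQ x := by rw [← map_zsmul, hy]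
      rw [← h1, map_zsmul, Finsupp.smul_apply, smul_eq_mul]
    have h2 : b.repr (T.mkQ x) = b.repr 0 := by
      rw [map_zero]; exact Finsupp.ext hcoord
    exact b.repr.injective h2
  have hxT : x ∈ T := (Submodule.Quotient.mk_eq_zero T).mp hmk
  -- Step 2 : find a nonzero integer annihilating T
  haveI : IsNoetherian ℤ Q := isNoetherian_of_isNoetherianRing_of_finite ℤ Q
  obtain ⟨s, hs⟩ := IsNoetherian.noetherian T
  have hm : ∀ g : Q, g ∈ s → ∃ c : ℤ, c ≠ 0 ∧ c • g = 0 := by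
    intro g hg
    have hgT : g ∈ T := hs ▸ Submodule.subset_span hg
    rw [hT, Submodule.mem_torsion_iff] at hgT
    obtain ⟨⟨c, hc⟩, h0⟩ := hgT
    exact ⟨c, nonZeroDivisors.ne_zero hc, by simpa [Submonoid.smul_def] using h0⟩
  choose k0 hk0 hkg0 using hm
  let k : Q → ℤ := fun g => if hg : g ∈ s then k0 g hg else 1
  have hk : ∀ g ∈ s, k g ≠ 0 ∧ k g • g = 0 := by
    intro g hg
    simp only [k, dif_pos hg]
    exact ⟨hk0 g hg, hkg0 g hg⟩
  set n : ℤ := ∏ g ∈ s, k g with hn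
  have hn0 : n ≠ 0 := Finset.prod_ne_zero_iff.mpr fun g hg => (hk g hg).1
  have hkill : ∀ z ∈ T, n • z = 0 := by
    have hle : T ≤ Submodule.torsionBy ℤ Q n := by
      rw [← hs]
      apply Submodule.span_le.mpr
      intro g hg
      rw [SetLike.mem_coe, Submodule.mem_torsionBy_iff, hn,
        ← Finset.mul_prod_erase s _ hg, mul_comm, mul_smul, (hk g hg).2, smul_zero]
    intro z hz
    exact (Submodule.mem_torsionBy_iff _ _).mp (hle hz)
  -- Step 3 : conclude
  obtain ⟨y, hy⟩ := hx |n| (abs_pos.mpr hn0)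
  rw [hT, Submodule.mem_torsion_iff] at hxT
  obtain ⟨⟨m, hm'⟩, hmx⟩ := hxT
  have hmx' : m • x = 0 := by simpa [Submonoid.smul_def] using hmx
  have hyT : y ∈ T := by
    rw [hT, Submodule.mem_torsion_iff]
    refine ⟨⟨m * |n|, mul_mem hm' (mem_nonZeroDivisors_of_ne_zero (by simp [hn0]))⟩, ?_⟩
    have : (m * |n|) • y = 0 := by rw [mul_smul, hy]; exact hmx'
    simpa [Submonoid.smul_def] using this
  have hny : n • y = 0 := hkill y hyT
  rw [← hy]
  rcases abs_choice n with h' | h' <;> rw [h'] <;> simp [hny]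

theorem le_of_sup_tV_eq {V : Type*} [AddCommGroup V] [Module ℤ V] [Module.Finite ℤ V]
    (U W : Submodule ℤ V)
    (h : ∀ t : ℤ, 0 < t →
      U ⊔ LinearMap.range (t • (LinearMap.id : V →ₗ[ℤ] V)) =
      W ⊔ LinearMap.range (t • (LinearMap.id : V →ₗ[ℤ] V))) :
    U ≤ W := by
  rename_i instAG instM instF
  haveI : Subsingleton (Module ℤ V) := (AddCommGroup.uniqueIntModule (M := V)).instSubsingleton
  have he : instM = AddCommGroup.toIntModule V := Subsingleton.elim _ _
  subst he
  intro u hu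
  have hq : W.mkQ u = 0 := by
    apply key_div_zero
    intro t ht
    have hmem : u ∈ W ⊔ LinearMap.range (t • (LinearMap.id : V →ₗ[ℤ] V)) := by
      rw [← h t ht]
      exact Submodule.mem_sup_left hu
    obtain ⟨w, hw, z, hz, hwz⟩ := Submodule.mem_sup.mp hmem
    obtain ⟨v, hv⟩ := hz
    refine ⟨W.mkQ v, ?_⟩
    have hz' : z = t • v := by rw [← hv]; simp
    rw [← map_zsmul, ← hz', ← hwz, map_add]
    have hw0 : W.mkQ w = 0 := by rwa [Submodule.mkQ_apply, Submodule.Quotient.mk_eq_zero]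
    rw [hw0, zero_add]
  rw [Submodule.mkQ_apply, Submodule.Quotient.mk_eq_zero] at hq
  exact hq

/-- Let `V` be a finitely generated `ℤ`-module and `U, W` submodules.
If `U + tV = W + tV` for all positive integers `t`, then `U = W`. -/
theorem stmt_1 (V : Type*) [AddCommGroup V] [Module ℤ V] [Module.Finite ℤ V]
    (U W : Submodule ℤ V)
    (h : ∀ t : ℤ, 0 < t →
      U ⊔ LinearMap.range (t • (LinearMap.id : V →ₗ[ℤ] V)) =
      W ⊔ LinearMap.range (t • (LinearMap.id : V →ₗ[ℤ] V))) :
    U = W :=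
  le_antisymm (le_of_sup_tV_eq U W h) (le_of_sup_tV_eq W U (fun t ht => (h t ht).symm))
end

section
/- Let L be a Lie ring whose additive group is generated by finitely many elements x₁,…,xₘ. Then L satisfies the n-Engel condition (i.e. (ad x)ⁿ y = 0 for all x, y ∈ L) if and only if (ad x)ⁿ y = 0 for all y ∈ L and all x ∈ L that are nonnegative integer linear combinations of x₁,…,xₘ. -/
/-!
Write `a = ∑ cᵢ xᵢ` with `cᵢ ∈ ℤ` and put `s = ∑ xᵢ`. For every large integer `t` the element
`a + t • s` is a nonnegative combination of the `xᵢ`, so `(ad a + t • ad s) ^ n y = 0`. The left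
side is a polynomial in `t` with coefficients in `L`; its forward differences of high order
vanish, so a vanishing tail propagates downwards to every integer `t`, and `t = 0` gives
`(ad a) ^ n y = 0`. Working with finite differences rather than roots avoids dividing in `L`,
which may have torsion.
-/

open Finset Polynomial fwdDiff

lemma fwdDiff_iter_smul_const {M G R : Type*} [AddCommMonoid M] [AddCommGroup G] [Ring R]
    [Module R G] (h : M) (f : M → R) (g : G) (n : ℕ) :
    (Δ_[h])^[n] (fun y ↦ f y • g) = fun y ↦ (Δ_[h])^[n] f y • g := by
  induction n with
  | zero => rfl
  | succ n ih =>
    ext y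
    simp only [Function.iterate_succ_apply', ih, fwdDiff_smul_const, Pi.smul_apply']

lemma eq_zero_of_fwdDiff_iter_eq_zero_of_forall_ge {G : Type*} [AddCommGroup G] {f : ℤ → G}
    {n : ℕ} (hΔ : (Δ_[1])^[n] f = 0) {k : ℤ} (hf : ∀ t ≥ k, f t = 0) : f = 0 := by
  suffices ∀ i : ℕ, ∀ t ≥ k - i, f t = 0 from
    _root_.funext fun t ↦ this (k - t).toNat t (by omega)
  intro i
  induction i with
  | zero => simpa using hf
  | succ i ih =>
    intro t ht
    have hsum := congr_fun hΔ t
    rw [fwdDiff_iter_eq_sum_shift, sum_range_succ', sum_eq_zero fun j _ ↦ ?_] at hsum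
    · have hlead : (-1 : ℤ) ^ n • f t = 0 := by simpa using hsum
      exact ((isUnit_neg_one (α := ℤ)).pow n).smul_eq_zero.mp hlead
    · rw [ih _ (by simp; omega), smul_zero]

namespace Polynomial

lemma eval_intCast_C_add_X_mul_C_pow {R : Type*} [Ring R] (A B : R) (n : ℕ) (t : ℤ) :
    ((C A + X * C B) ^ n).eval (t : R) = (A + t • B) ^ n := by
  have hpow : ((C A + X * C B) ^ n).eval (t : R) = (C A + X * C B).eval (t : R) ^ n :=
    map_pow (eval₂RingHom' (RingHom.id R) (t : R) fun a ↦ (Int.cast_commute t a).symm) _ n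
  rw [hpow]
  simp [zsmul_eq_mul, (Int.cast_commute t B).eq]

variable {R G : Type*} [Ring R] [AddCommGroup G] [Module R G]

lemma fwdDiff_iter_eval_intCast_smul (P : R[X]) (g : G) :
    (Δ_[1])^[P.natDegree + 1] (fun t : ℤ ↦ P.eval (t : R) • g) = 0 := by
  have hexpand : (fun t : ℤ ↦ P.eval (t : R) • g) =
      ∑ i ∈ range (P.natDegree + 1), fun t : ℤ ↦ t ^ i • (P.coeff i • g) := by
    ext t
    simp only [eval_eq_sum_range, sum_smul, Finset.sum_apply]
    refine sum_congr rfl fun i _ ↦ ?_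
    rw [← ((Int.cast_commute t _).pow_left i).eq, mul_smul, ← Int.cast_pow,
      Int.cast_smul_eq_zsmul]
  rw [hexpand, fwdDiff_iter_finsetSum]
  refine sum_eq_zero fun i hi ↦ ?_
  rw [fwdDiff_iter_smul_const, fwdDiff_iter_pow_eq_zero_of_lt (mem_range.mp hi)]
  ext
  simp

lemma eval_intCast_smul_eq_zero_of_forall_ge {P : R[X]} {g : G} {k : ℤ}
    (h : ∀ t ≥ k, P.eval (t : R) • g = 0) (t : ℤ) : P.eval (t : R) • g = 0 :=
  congr_fun (eq_zero_of_fwdDiff_iter_eq_zero_of_forall_ge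
    (fwdDiff_iter_eval_intCast_smul P g) h) t

end Polynomial

lemma Submodule.exists_natCoeffs_eq_add_smul_sum {ι M : Type*} [Fintype ι] [AddCommGroup M]
    {x : ι → M} {a : M} (ha : a ∈ span ℤ (Set.range x)) :
    ∃ k : ℤ, ∀ t ≥ k, ∃ d : ι → ℕ, ∑ i, (d i : ℤ) • x i = a + t • ∑ i, x i := by
  obtain ⟨c, rfl⟩ := (mem_span_range_iff_exists_fun ℤ).mp ha
  refine ⟨∑ i, |c i|, fun t ht ↦ ⟨fun i ↦ (c i + t).toNat, ?_⟩⟩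
  rw [smul_sum, ← sum_add_distrib]
  refine sum_congr rfl fun i _ ↦ ?_
  have hle : |c i| ≤ ∑ j, |c j| := single_le_sum (fun j _ ↦ abs_nonneg (c j)) (mem_univ i)
  have hneg := neg_abs_le (c i)
  rw [Int.toNat_of_nonneg (by omega), add_smul]

/-- A Lie ring additively generated by `x 1, …, x m` is `n`-Engel iff
`(ad x)^n y = 0` for all `y` and all nonnegative linear combinations `x`
of the generators. -/
theorem stmt_3 (L : Type*) [LieRing L] (m n : ℕ) (x : Fin m → L)
    (hgen : Submodule.span ℤ (Set.range x) = ⊤) :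
    (∀ a y : L, ((LieAlgebra.ad ℤ L a) ^ n) y = 0) ↔
      (∀ c : Fin m → ℕ, ∀ y : L,
        ((LieAlgebra.ad ℤ L (∑ i, (c i : ℤ) • x i)) ^ n) y = 0) := by
  refine ⟨fun h c y ↦ h _ y, fun h a y ↦ ?_⟩
  obtain ⟨k, hk⟩ := Submodule.exists_natCoeffs_eq_add_smul_sum (hgen ▸ Submodule.mem_top : a ∈ _)
  set P := (C (LieAlgebra.ad ℤ L a) + X * C (LieAlgebra.ad ℤ L (∑ i, x i))) ^ n
  have hP (t : ℤ) : P.eval (t : Module.End ℤ L) = LieAlgebra.ad ℤ L (a + t • ∑ i, x i) ^ n := by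
    rw [eval_intCast_C_add_X_mul_C_pow, map_add, map_zsmul]
  have hvanish (t : ℤ) (ht : t ≥ k) : P.eval (t : Module.End ℤ L) • y = 0 := by
    obtain ⟨d, hd⟩ := hk t ht
    rw [hP, ← hd]
    exact h d y
  have hzero := eval_intCast_smul_eq_zero_of_forall_ge hvanish 0
  rwa [hP, zero_smul, add_zero] at hzero
end

section
/- Let A be a commutative ring and M an A-module. Let S''ₙ(M) be the image of the symmetrization map z ↦ ∑_{σ∈Sₙ} σz on Tⁿ(M), and let Pₙ(M) be the A-submodule of Tⁿ(M) generated by all n-th tensor powers x⊗⋯⊗x of elements x ∈ M. Then S''ₙ(M) ⊆ Pₙ(M) ⊆ S'ₙ(M), where S'ₙ(M) is the module of symmetric tensors. -/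
open Finset PiTensorProduct

lemma coeff_lemma_int {n : ℕ} (r : Fin n → Fin n) :
    (∑ S : Finset (Fin n), if ∀ i, r i ∈ S then ((-1:ℤ)^(n - S.card)) else 0)
      = if Function.Surjective r then 1 else 0 := by
  classical
  have hT : ∀ S : Finset (Fin n), (∀ i, r i ∈ S) ↔ Finset.image r univ ⊆ S := by
    intro S
    constructor
    · intro h y hy
      obtain ⟨i, -, rfl⟩ := Finset.mem_image.1 hy
      exact h i
    · intro h i
      exact h (Finset.mem_image.2 ⟨i, Finset.mem_univ i, rfl⟩)
  set T := Finset.image r univ with hTdef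
  have key : (∑ S : Finset (Fin n), if T ⊆ S then ((-1:ℤ)^(n - S.card)) else 0)
      = ∑ U ∈ Tᶜ.powerset, (-1:ℤ)^U.card := by
    rw [← Finset.sum_filter]
    refine Finset.sum_nbij' (fun S => Sᶜ) (fun U => Uᶜ) ?_ ?_ ?_ ?_ ?_
    · intro S hS
      simp only [Finset.mem_filter] at hS
      simpa [Finset.mem_powerset] using Finset.compl_subset_compl.2 hS.2
    · intro U hU
      simp only [Finset.mem_powerset] at hU
      simp only [Finset.mem_filter, Finset.mem_univ, true_and]
      simpa using Finset.compl_subset_compl.2 hU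
    · intro S _; simp
    · intro U _; simp
    · intro S _
      rw [Finset.card_compl, Fintype.card_fin]
  simp only [hT, key, sum_powerset_neg_one_pow_card, Finset.compl_eq_empty_iff]
  congr 1
  rw [eq_iff_iff]
  constructor
  · intro h y
    have := (Finset.eq_univ_iff_forall.1 h) y
    obtain ⟨i, -, rfl⟩ := Finset.mem_image.1 this
    exact ⟨i, rfl⟩
  · intro h
    refine Finset.eq_univ_iff_forall.2 fun y => ?_
    obtain ⟨i, rfl⟩ := h y
    exact Finset.mem_image.2 ⟨i, Finset.mem_univ i, rfl⟩

lemma coeff_lemma (A : Type*) [CommRing A] {n : ℕ} (r : Fin n → Fin n) :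
    (∑ S : Finset (Fin n), if ∀ i, r i ∈ S then ((-1:A)^(n - S.card)) else 0)
      = if Function.Surjective r then 1 else 0 := by
  classical
  have := congrArg (fun z : ℤ => (z : A)) (coeff_lemma_int r)
  push_cast at this
  convert this using 2 <;> simp

set_option maxHeartbeats 1000000 in
lemma polar_step (A M : Type*) [CommRing A] [AddCommGroup M] [Module A M] (n : ℕ)
    (x : Fin n → M) (S : Finset (Fin n)) :
    ∑ r : Fin n → Fin n,
        (if ∀ i, r i ∈ S then ((-1:A)^(n - S.card)) else 0) • tprod A (fun i => x (r i))
      = ((-1:A)^(n - S.card)) • tprod A (fun _ : Fin n => ∑ i ∈ S, x i) := by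
  classical
  have expand : tprod A (fun _ : Fin n => ∑ i ∈ S, x i)
      = ∑ r ∈ Fintype.piFinset (fun _ : Fin n => S), tprod A (fun i => x (r i)) :=
    (tprod A (s := fun _ : Fin n => M)).map_sum_finset (fun _ j => x j) (fun _ => S)
  rw [expand, Finset.smul_sum]
  rw [show (Fintype.piFinset (fun _ : Fin n => S))
      = univ.filter (fun r : Fin n → Fin n => ∀ i, r i ∈ S) from by
    ext r; simp [Fintype.mem_piFinset]]
  rw [Finset.sum_filter]
  refine Finset.sum_congr rfl fun r _ => ?_
  split <;> simp

set_option maxHeartbeats 1000000 in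
lemma polar (A M : Type*) [CommRing A] [AddCommGroup M] [Module A M] (n : ℕ)
    (x : Fin n → M) :
    ∑ σ : Equiv.Perm (Fin n), tprod A (fun i => x (σ i))
      = ∑ S : Finset (Fin n), ((-1:A)^(n - S.card)) • tprod A (fun _ : Fin n => ∑ i ∈ S, x i) := by
  classical
  calc ∑ σ : Equiv.Perm (Fin n), tprod A (fun i => x (σ i))
      = ∑ r ∈ univ.filter (fun r : Fin n → Fin n => Function.Surjective r),
          tprod A (fun i => x (r i)) := by
        refine Finset.sum_nbij (fun σ : Equiv.Perm (Fin n) => (σ : Fin n → Fin n)) ?_ ?_ ?_ ?_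
        · intro σ _
          simp [σ.surjective]
        · intro σ _ τ _ h
          exact Equiv.coe_fn_injective h
        · intro r hr
          have hr' : Function.Surjective r := by
            simpa using (Finset.mem_coe.1 hr)
          have hb : Function.Bijective r := Finite.surjective_iff_bijective.1 hr'
          exact ⟨Equiv.ofBijective r hb, by simp, rfl⟩
        · intro σ _; rfl
    _ = ∑ r : Fin n → Fin n, (if Function.Surjective r then (1:A) else 0) • tprod A (fun i => x (r i)) := by
        rw [Finset.sum_filter]
        refine Finset.sum_congr rfl fun r _ => ?_
        split <;> simp
    _ = ∑ r : Fin n → Fin n, (∑ S : Finset (Fin n), if ∀ i, r i ∈ S then ((-1:A)^(n - S.card)) else 0)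
          • tprod A (fun i => x (r i)) := by
        refine Finset.sum_congr rfl fun r _ => ?_
        rw [coeff_lemma]
    _ = ∑ r : Fin n → Fin n, ∑ S : Finset (Fin n),
          (if ∀ i, r i ∈ S then ((-1:A)^(n - S.card)) else 0) • tprod A (fun i => x (r i)) := by
        refine Finset.sum_congr rfl fun r _ => ?_
        rw [Finset.sum_smul]
    _ = ∑ S : Finset (Fin n), ∑ r : Fin n → Fin n,
          (if ∀ i, r i ∈ S then ((-1:A)^(n - S.card)) else 0) • tprod A (fun i => x (r i)) := by
        rw [Finset.sum_comm]
    _ = ∑ S : Finset (Fin n), ((-1:A)^(n - S.card)) • tprod A (fun _ : Fin n => ∑ i ∈ S, x i) :=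
        Finset.sum_congr rfl fun S _ => polar_step A M n x S



/-- The linear map on the `n`-th tensor power `Tⁿ(M)` permuting the factors by
`σ`: it sends `x₁ ⊗ ⋯ ⊗ xₙ` to `x_{σ⁻¹(1)} ⊗ ⋯ ⊗ x_{σ⁻¹(n)}`. -/
noncomputable def permMap (A M : Type*) [CommRing A] [AddCommGroup M] [Module A M]
    (n : ℕ) (σ : Equiv.Perm (Fin n)) :
    PiTensorProduct A (fun _ : Fin n => M) →ₗ[A] PiTensorProduct A (fun _ : Fin n => M) :=
  (PiTensorProduct.reindex A (fun _ : Fin n => M) σ).toLinearMap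

/-- `S'ₙ(M)`: the submodule of symmetric tensors in `Tⁿ(M)`. -/
noncomputable def symTensors (A M : Type*) [CommRing A] [AddCommGroup M] [Module A M]
    (n : ℕ) : Submodule A (PiTensorProduct A (fun _ : Fin n => M)) :=
  ⨅ σ : Equiv.Perm (Fin n), LinearMap.eqLocus (permMap A M n σ) LinearMap.id

/-- The symmetrization map `z ↦ ∑_{σ ∈ Sₙ} σ z` on `Tⁿ(M)`. -/
noncomputable def symmetrize (A M : Type*) [CommRing A] [AddCommGroup M] [Module A M]
    (n : ℕ) :
    PiTensorProduct A (fun _ : Fin n => M) →ₗ[A] PiTensorProduct A (fun _ : Fin n => M) :=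
  ∑ σ : Equiv.Perm (Fin n), permMap A M n σ

/-- `Pₙ(M)`: the submodule of `Tⁿ(M)` generated by the `n`-th tensor powers
`x ⊗ ⋯ ⊗ x` of elements `x ∈ M`. -/
noncomputable def powersSubmodule (A M : Type*) [CommRing A] [AddCommGroup M] [Module A M]
    (n : ℕ) : Submodule A (PiTensorProduct A (fun _ : Fin n => M)) :=
  Submodule.span A {z | ∃ x : M, z = PiTensorProduct.tprod A (fun _ : Fin n => x)}

lemma symmetrize_tprod_mem (A M : Type*) [CommRing A] [AddCommGroup M] [Module A M]
    (n : ℕ) (f : Fin n → M) :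
    symmetrize A M n (tprod A f) ∈ powersSubmodule A M n := by
  classical
  have h1 : symmetrize A M n (tprod A f)
      = ∑ σ : Equiv.Perm (Fin n), tprod A (fun i => f (σ.symm i)) := by
    simp [symmetrize, permMap, LinearMap.sum_apply]
  have h2 : (∑ σ : Equiv.Perm (Fin n), tprod A (fun i => f (σ.symm i)))
      = ∑ σ : Equiv.Perm (Fin n), tprod A (fun i => f (σ i)) := by
    refine Finset.sum_bijective (fun σ => σ⁻¹) ?_ (by simp) ?_
    · exact ⟨fun a b h => by simpa using congrArg (·⁻¹) h, fun σ => ⟨σ⁻¹, by simp⟩⟩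
    · intro σ _; rfl
  rw [h1, h2, polar A M n f]
  refine Submodule.sum_mem _ fun S _ => Submodule.smul_mem _ _ ?_
  exact Submodule.subset_span ⟨∑ i ∈ S, f i, rfl⟩

/-- `S''ₙ(M) ⊆ Pₙ(M) ⊆ S'ₙ(M)`. -/
theorem stmt_10 (A M : Type*) [CommRing A] [AddCommGroup M] [Module A M] (n : ℕ) :
    LinearMap.range (symmetrize A M n) ≤ powersSubmodule A M n ∧
      powersSubmodule A M n ≤ symTensors A M n := by
  constructor
  · rintro _ ⟨w, rfl⟩
    induction w using PiTensorProduct.induction_on with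
    | smul_tprod r f =>
      rw [map_smul]
      exact Submodule.smul_mem _ _ (symmetrize_tprod_mem A M n f)
    | add u v hu hv =>
      rw [map_add]
      exact Submodule.add_mem _ hu hv
  · rw [powersSubmodule, Submodule.span_le]
    rintro _ ⟨x, rfl⟩
    simp only [symTensors, SetLike.mem_coe, Submodule.mem_iInf]
    intro σ
    show permMap A M n σ _ = LinearMap.id _
    simp [permMap, PiTensorProduct.reindex_tprod]
end

section
/- Let M be a free ℤ-module of finite rank m with basis x₁,…,xₘ. Then the image S''ₙ(M) of the symmetrization map on Tⁿ(M) is a free ℤ-module with basis the elements k₁!⋯k_s!·(x_{j₁}^{(k₁)}⋯x_{j_s}^{(k_s)})* for 1 ≤ j₁ < ⋯ < j_s ≤ m, positive k₁,…,k_s with sum n, and 1 ≤ s ≤ n. -/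
/-- `(x_{g 1} ⋯ x_{g n})*`: the sum of all distinct tensors obtained by permuting
the factors of the pure tensor `x_{g 1} ⊗ ⋯ ⊗ x_{g n}`, i.e. the sum over all
words `w` that are rearrangements of `g` of `x_{w 1} ⊗ ⋯ ⊗ x_{w n}`. -/
noncomputable def distinctSym (M : Type*) [AddCommGroup M] [Module ℤ M]
    {m : ℕ} (x : Fin m → M) (n : ℕ) (g : Fin n → Fin m) :
    PiTensorProduct ℤ (fun _ : Fin n => M) :=
  ∑ w ∈ Finset.univ.filter
      (fun w : Fin n → Fin m =>
        Multiset.map w Finset.univ.val = Multiset.map g Finset.univ.val),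
    PiTensorProduct.tprod ℤ (fun i => x (w i))

/-!
Symmetrizing the basis tensor `x_{f 1} ⊗ ⋯ ⊗ x_{f n}` produces every rearrangement `w` of the
word `f` once for each permutation `σ` with `f ∘ σ = w`. These `σ` form a coset of the stabilizer
of `f`, which has `k₁!⋯k_s!` elements, so the symmetrization is `k₁!⋯k_s!·(x_f)*`. It only depends
on the rearrangement class of `f`, so as `f` runs over all words (which index a basis of `Tⁿ(M)`)
the image `S''ₙ(M)` is spanned by these elements for monotone `f`. They are linearly independent:
their supports in the tensor basis are the pairwise disjoint rearrangement classes, and the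
coefficients `k₁!⋯k_s!` are nonzero.
-/

open Finset Nat Module PiTensorProduct

section Rearrangement

variable {ι α : Type*} [Fintype ι] [DecidableEq α]

theorem Multiset.count_map_univ_val (f : ι → α) (a : α) :
    (univ.val.map f).count a = #{i | f i = a} := by
  rw [Multiset.count_map, Finset.card_def, Finset.filter_val]
  simp only [eq_comm]

theorem Multiset.map_univ_val_eq_iff_exists_perm {f g : ι → α} :
    univ.val.map f = univ.val.map g ↔ ∃ σ : Equiv.Perm ι, g ∘ σ = f := by
  constructor
  · intro h
    have hfiber (a : α) : {i // f i = a} ≃ {i // g i = a} := by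
      refine Fintype.equivOfCardEq ?_
      rw [Fintype.card_subtype, Fintype.card_subtype, ← Multiset.count_map_univ_val,
        ← Multiset.count_map_univ_val, h]
    exact ⟨Equiv.ofFiberEquiv hfiber, funext (Equiv.ofFiberEquiv_map hfiber)⟩
  · rintro ⟨σ, rfl⟩
    rw [← Multiset.map_map, Multiset.map_univ_val_equiv]

theorem card_filter_comp_perm_eq_prod_factorial [DecidableEq ι] [Fintype α] {f g : ι → α}
    {σ₀ : Equiv.Perm ι} (h : g ∘ σ₀ = f) :
    #{σ : Equiv.Perm ι | g ∘ σ = f} = ∏ a, (#{i | g i = a})! := by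
  have hcomp : Function.Injective fun u : ι → α => u ∘ σ₀ :=
    σ₀.surjective.injective_comp_right
  have e : {σ : Equiv.Perm ι // g ∘ σ = g} ≃ {σ : Equiv.Perm ι // g ∘ σ = f} :=
    (Equiv.mulRight σ₀).subtypeEquiv fun σ => by
      rw [← h, Equiv.coe_mulRight, Equiv.Perm.coe_mul, ← Function.comp_assoc]
      exact hcomp.eq_iff.symm
  rw [← Fintype.card_subtype, ← Fintype.card_congr e, DomMulAct.stabilizer_card]
  simp only [Fintype.card_subtype]

end Rearrangement

theorem Monotone.eq_of_map_univ_val_eq {n : ℕ} {α : Type*} [PartialOrder α] {f g : Fin n → α}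
    (hf : Monotone f) (hg : Monotone g) (h : univ.val.map f = univ.val.map g) : f = g := by
  classical
  obtain ⟨σ, rfl⟩ := Multiset.map_univ_val_eq_iff_exists_perm.mp h
  exact Tuple.unique_monotone (τ := 1) hf hg

theorem linearIndependent_of_eval_eq_ite {R N ι : Type*} [CommRing R] [NoZeroDivisors R]
    [AddCommGroup N] [Module R N] [DecidableEq ι] {v : ι → N} (coord : ι → N →ₗ[R] R)
    {c : ι → R} (hc : ∀ i, c i ≠ 0) (h : ∀ i j, coord i (v j) = if i = j then c i else 0) :
    LinearIndependent R v := by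
  rw [linearIndependent_iff']
  intro s a hsum i hi
  have hcoord := congrArg (coord i) hsum
  simp only [map_sum, map_smul, h, smul_eq_mul, mul_ite, mul_zero, Finset.sum_ite_eq, hi,
    if_true, map_zero] at hcoord
  exact (mul_eq_zero.mp hcoord).resolve_right (hc i)

section Symmetrization

variable {A M : Type*} [CommRing A] [AddCommGroup M] [Module A M] {n : ℕ}

theorem symmetrize_tprod (v : Fin n → M) :
    symmetrize A M n (tprod A v) = ∑ σ : Equiv.Perm (Fin n), tprod A (v ∘ σ) := by
  rw [symmetrize, LinearMap.sum_apply]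
  exact Fintype.sum_equiv (Equiv.inv _) _ _ fun σ => reindex_tprod σ v

theorem symmetrize_tprod_comp_perm (v : Fin n → M) (σ : Equiv.Perm (Fin n)) :
    symmetrize A M n (tprod A (v ∘ σ)) = symmetrize A M n (tprod A v) := by
  simp only [symmetrize_tprod]
  exact Fintype.sum_equiv (Equiv.mulLeft σ) _ _ fun τ => rfl

end Symmetrization

section Integral

variable {M : Type*} [AddCommGroup M] [Module ℤ M] {m n : ℕ}

variable (M) in
noncomputable def scaledDistinctSym (x : Fin m → M) (n : ℕ) (g : Fin n → Fin m) :
    PiTensorProduct ℤ (fun _ : Fin n => M) :=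
  (∏ j, (#{i | g i = j})!) • distinctSym M x n g

theorem symmetrize_tprod_comp (x : Fin m → M) (f : Fin n → Fin m) :
    symmetrize ℤ M n (tprod ℤ fun i => x (f i)) = scaledDistinctSym M x n f := by
  have himage : univ.image (fun σ : Equiv.Perm (Fin n) => f ∘ σ) =
      univ.filter fun w => univ.val.map w = univ.val.map f := by
    ext w
    simp only [mem_image, mem_filter, mem_univ, true_and,
      Multiset.map_univ_val_eq_iff_exists_perm]
  calc symmetrize ℤ M n (tprod ℤ fun i => x (f i))
      = ∑ σ : Equiv.Perm (Fin n), tprod ℤ fun i => x ((f ∘ σ) i) := symmetrize_tprod _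
    _ = ∑ w ∈ univ.image (fun σ : Equiv.Perm (Fin n) => f ∘ σ),
          #{σ : Equiv.Perm (Fin n) | f ∘ σ = w} • tprod ℤ fun i => x (w i) :=
        Finset.sum_comp (fun w => tprod ℤ fun i => x (w i))
          fun σ : Equiv.Perm (Fin n) => f ∘ σ
    _ = scaledDistinctSym M x n f := by
      rw [himage, scaledDistinctSym, distinctSym, ← Finset.sum_nsmul]
      refine Finset.sum_congr rfl fun w hw => ?_
      obtain ⟨σ, hσ⟩ :=
        Multiset.map_univ_val_eq_iff_exists_perm.mp (Finset.mem_filter.mp hw).2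
      rw [card_filter_comp_perm_eq_prod_factorial hσ]

variable (b : Basis (Fin m) ℤ M)

theorem range_symmetrize_eq_span_scaledDistinctSym :
    LinearMap.range (symmetrize ℤ M n) =
      Submodule.span ℤ (Set.range fun g : {g : Fin n → Fin m // Monotone g} =>
        scaledDistinctSym M b n g.val) := by
  set B := Basis.piTensorProduct fun _ : Fin n => b
  have hB (f : Fin n → Fin m) : B f = tprod ℤ fun i => b (f i) :=
    Basis.piTensorProduct_apply _ f
  have hsort (f : Fin n → Fin m) :
      symmetrize ℤ M n (B f) = scaledDistinctSym M b n (f ∘ Tuple.sort f) := by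
    rw [hB, ← symmetrize_tprod_comp_perm _ (Tuple.sort f)]
    exact symmetrize_tprod_comp b _
  have hrange : Set.range (symmetrize ℤ M n ∘ B) =
      Set.range fun g : {g : Fin n → Fin m // Monotone g} => scaledDistinctSym M b n g.val :=
    le_antisymm
      (Set.range_subset_iff.mpr fun f => ⟨⟨_, Tuple.monotone_sort f⟩, (hsort f).symm⟩)
      (Set.range_subset_iff.mpr fun g =>
        ⟨g.val, by simp only [Function.comp_apply, hB, symmetrize_tprod_comp]⟩)
  rw [LinearMap.range_eq_map, ← B.span_eq, Submodule.map_span, ← Set.range_comp, hrange]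

theorem Basis.piTensorProduct_repr_distinctSym (f w : Fin n → Fin m) :
    (Basis.piTensorProduct fun _ : Fin n => b).repr (distinctSym M b n f) w =
      if univ.val.map w = univ.val.map f then 1 else 0 := by
  have hB (u : Fin n → Fin m) : (tprod ℤ fun i => b (u i)) =
      Basis.piTensorProduct (fun _ : Fin n => b) u := (Basis.piTensorProduct_apply _ u).symm
  simp only [distinctSym, hB, map_sum, Basis.repr_self, Finsupp.finsetSum_apply,
    Finsupp.single_apply, Finset.sum_ite_eq', mem_filter, mem_univ, true_and]

theorem linearIndependent_scaledDistinctSym :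
    LinearIndependent ℤ fun g : {g : Fin n → Fin m // Monotone g} =>
      scaledDistinctSym M b n g.val := by
  refine linearIndependent_of_eval_eq_ite
    (fun g => (Basis.piTensorProduct fun _ : Fin n => b).coord g.val)
    (c := fun g => ((∏ j, (#{i | g.val i = j})! : ℕ) : ℤ)) (fun g => by positivity)
    fun g g' => ?_
  have hmap : univ.val.map g.val = univ.val.map g'.val ↔ g = g' :=
    ⟨fun h => Subtype.ext (g.2.eq_of_map_univ_val_eq g'.2 h), fun h => h ▸ rfl⟩
  rw [scaledDistinctSym, map_nsmul, Basis.coord_apply, Basis.piTensorProduct_repr_distinctSym]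
  by_cases hgg : g = g'
  · subst hgg
    simp
  · rw [if_neg (hmap.not.mpr hgg), if_neg hgg, smul_zero]

end Integral

/-- For `M` free of rank `m` over `ℤ` with basis `x₁,…,xₘ`, the image `S''ₙ(M)` of
the symmetrization map on `Tⁿ(M)` is a free `ℤ`-module with basis the elements
`k₁!⋯k_s!·(x_{j₁}^{(k₁)}⋯x_{j_s}^{(k_s)})*`, indexed by monotone words
`g : Fin n → Fin m` (with `k_j` the multiplicity of `j` in `g`). -/
theorem stmt_12 (M : Type*) [AddCommGroup M] [Module ℤ M] (m n : ℕ)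
    (b : Module.Basis (Fin m) ℤ M) :
    ∃ c : Module.Basis {g : Fin n → Fin m // Monotone g} ℤ
        (LinearMap.range (symmetrize ℤ M n)),
      ∀ g, (c g : PiTensorProduct ℤ (fun _ : Fin n => M)) =
        (∏ j : Fin m, ((Finset.univ.filter fun i => g.val i = j).card).factorial) •
          distinctSym M (⇑b) n g.val := by
  refine ⟨(Basis.span (linearIndependent_scaledDistinctSym b)).map
    (LinearEquiv.ofEq _ _ (range_symmetrize_eq_span_scaledDistinctSym b).symm), fun g => ?_⟩
  rw [Basis.map_apply, LinearEquiv.coe_ofEq_apply, Basis.span_apply]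
  rfl
end

section
/- Let M be a free ℤ-module of finite rank m and p a prime. Then the highest power of p dividing the index |S'_p(M)/S''_p(M)| is exactly p^m. -/
/-!
Choosing a basis `b` of `M` identifies `Tᵖ(M)` with the permutation module `ℤ[X]` on
`X = (Fin p → Fin m)`, the words in the basis, with `Sₚ` permuting the letters. For any finite
`G`-set `X`, the invariants of `ℤ[X]` are free on the orbit sums, and the norm sends a basis
vector `x` to `|Stab x|` times its orbit sum, so `|ℤ[X]^G / N ℤ[X]| = ∏_{orbits} |Stab x|`.
For words of length `p`, the stabilizer of a constant word is all of `Sₚ`, of order `p!` with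
`p`-adic valuation `1`; any other word has a stabilizer of order prime to `p`, since an element
of order `p` in `Sₚ` is a `p`-cycle, which moves every letter to every other one. The `m`
constant words thus contribute exactly `p ^ m`.
-/

open Finset MulAction MonoidAlgebra

section OrbitSums

variable {G X : Type*} [Group G] [MulAction G X] [Fintype G]

theorem card_filter_smul_eq [DecidableEq X] {x y : X} {g₀ : G} (h : g₀ • x = y) :
    #{g : G | g • x = y} = Nat.card (stabilizer G x) := by
  subst h
  rw [Nat.card_eq_fintype_card, ← Fintype.card_coe]
  refine Fintype.card_congr ((Equiv.mulLeft g₀⁻¹).subtypeEquiv fun g => ?_)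
  simp [mul_smul, inv_smul_eq_iff]

theorem card_stabilizer_dvd_sum_smul (f : X → ℤ) (x : X) :
    (Nat.card (stabilizer G x) : ℤ) ∣ ∑ g : G, f (g • x) := by
  classical
  rw [← Finset.sum_fiberwise_of_maps_to (t := univ.image (· • x))
    fun g _ => mem_image_of_mem _ (mem_univ g)]
  refine Finset.dvd_sum fun y hy => ?_
  obtain ⟨g₀, -, hg₀⟩ := mem_image.mp hy
  rw [Finset.sum_congr rfl fun g hg => by rw [(mem_filter.mp hg).2], sum_const,
    card_filter_smul_eq hg₀, nsmul_eq_mul]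
  exact dvd_mul_right _ _

end OrbitSums

section FixedPoints

variable {G X : Type*} [Group G] [MulAction G X]

theorem card_stabilizer_of_mem_fixedPoints {x : X} (hx : x ∈ fixedPoints G X) :
    Nat.card (stabilizer G x) = Nat.card G := by
  rw [show stabilizer G x = ⊤ from eq_top_iff.mpr fun g _ => hx g, Subgroup.card_top]

theorem out_mk_of_mem_fixedPoints {x : X} (hx : x ∈ fixedPoints G X) :
    (⟦x⟧ : orbitRel.Quotient G X).out = x := by
  obtain ⟨g, hg⟩ := Quotient.mk_out (s := orbitRel G X) x
  exact hg.symm.trans (hx g)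

theorem card_orbitRel_quotient_out_mem_fixedPoints :
    Nat.card {ω : orbitRel.Quotient G X // ω.out ∈ fixedPoints G X} =
      Nat.card (fixedPoints G X) :=
  Nat.card_congr
    { toFun ω := ⟨ω.1.out, ω.2⟩
      invFun x := ⟨⟦x.1⟧, by rw [out_mk_of_mem_fixedPoints x.2]; exact x.2⟩
      left_inv ω := Subtype.ext (Quotient.out_eq ω.1)
      right_inv x := Subtype.ext (out_mk_of_mem_fixedPoints x.2) }

end FixedPoints

namespace Representation

variable {k G X : Type*} [CommRing k] [Group G] [MulAction G X]

theorem mem_invariants_ofMulAction_iff (c : k[X]) :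
    c ∈ (ofMulAction k G X).invariants ↔ ∀ (g : G) (x : X), c.coeff (g • x) = c.coeff x := by
  simp only [mem_invariants, ← coeff_inj, Finsupp.ext_iff, coeff_ofMulAction]
  exact ⟨fun h g x => by simpa using h g⁻¹ x, fun h g x => h g⁻¹ x⟩

theorem coeff_norm_ofMulAction [Fintype G] (c : k[X]) (x : X) :
    ((ofMulAction k G X).norm c).coeff x = ∑ g : G, c.coeff (g • x) := by
  simp only [norm, LinearMap.sum_apply, coeff_sum, Finsupp.finsetSum_apply, coeff_ofMulAction]
  exact Fintype.sum_equiv (Equiv.inv G) _ _ fun _ => rfl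

noncomputable def invariantsEquivOrbitFun [Finite X] :
    (ofMulAction k G X).invariants ≃ₗ[k] (orbitRel.Quotient G X → k) where
  toFun c ω := c.1.coeff ω.out
  map_add' _ _ := rfl
  map_smul' _ _ := rfl
  invFun d := ⟨ofCoeff (Finsupp.equivFunOnFinite.symm fun x => d ⟦x⟧), by
    rw [mem_invariants_ofMulAction_iff]
    intro g x
    simp only [Finsupp.equivFunOnFinite_symm_apply_apply, orbitRel.Quotient.quotient_smul_eq]⟩
  left_inv c := by
    ext x
    obtain ⟨g, hg⟩ := Quotient.mk_out (s := orbitRel G X) x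
    simp only [Finsupp.equivFunOnFinite_symm_apply_apply, ← hg]
    exact (mem_invariants_ofMulAction_iff _).mp c.2 g x
  right_inv d := funext fun ω => by
    simp only [Finsupp.equivFunOnFinite_symm_apply_apply, Quotient.out_eq]

variable [Fintype G] [Finite X]

theorem map_invariantsEquivOrbitFun_comap_range_norm :
    ((LinearMap.range (ofMulAction ℤ G X).norm).comap
        (ofMulAction ℤ G X).invariants.subtype).map
      (invariantsEquivOrbitFun : _ ≃ₗ[ℤ] (orbitRel.Quotient G X → ℤ)).toLinearMap =
      Submodule.pi Set.univ fun ω => Ideal.span {(Nat.card (stabilizer G ω.out) : ℤ)} := by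
  classical
  ext d
  simp only [Submodule.mem_map, Submodule.mem_comap, LinearMap.mem_range, Submodule.mem_pi,
    Set.mem_univ, forall_const, Ideal.mem_span_singleton]
  constructor
  · rintro ⟨c, ⟨a, ha⟩, rfl⟩ ω
    rw [Submodule.subtype_apply] at ha
    change _ ∣ c.1.coeff ω.out
    rw [← ha, coeff_norm_ofMulAction]
    exact card_stabilizer_dvd_sum_smul _ _
  · intro hd
    -- a preimage under the norm, supported on the chosen orbit representatives
    let a : ℤ[X] := ofCoeff <| Finsupp.equivFunOnFinite.symm fun x =>
      if x = (⟦x⟧ : orbitRel.Quotient G X).out then d ⟦x⟧ / Nat.card (stabilizer G x) else 0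
    refine ⟨⟨norm _ a, fun g => self_norm_apply _ g a⟩, ⟨a, rfl⟩, funext fun ω => ?_⟩
    change ((ofMulAction ℤ G X).norm a).coeff ω.out = d ω
    have ha : ∀ g : G, a.coeff (g • ω.out) =
        if g • ω.out = ω.out then d ω / Nat.card (stabilizer G ω.out) else 0 := by
      intro g
      simp only [a, Finsupp.equivFunOnFinite_symm_apply_apply,
        orbitRel.Quotient.quotient_smul_eq, Quotient.out_eq]
      split_ifs with h <;> simp only [h]
    rw [coeff_norm_ofMulAction, Finset.sum_congr rfl fun g _ => ha g, Finset.sum_ite, sum_const,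
      sum_const_zero, add_zero, card_filter_smul_eq (x := ω.out) (one_smul G _), nsmul_eq_mul,
      Int.mul_ediv_cancel' (hd ω)]

theorem card_invariants_quotient_range_norm [Fintype (orbitRel.Quotient G X)] :
    Nat.card ((ofMulAction ℤ G X).invariants ⧸
        (LinearMap.range (ofMulAction ℤ G X).norm).comap (ofMulAction ℤ G X).invariants.subtype) =
      ∏ ω : orbitRel.Quotient G X, Nat.card (stabilizer G ω.out) := by
  classical
  let e := Submodule.Quotient.equiv _ _ _
    (map_invariantsEquivOrbitFun_comap_range_norm (G := G) (X := X))
  rw [Nat.card_congr (e.toEquiv.trans (Submodule.quotientPi _).toEquiv), Nat.card_pi]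
  exact Finset.prod_congr rfl fun ω _ => by
    rw [Nat.card_congr (Int.quotientSpanNatEquivZMod _).toEquiv, Nat.card_zmod]

end Representation

theorem Submodule.card_quotient_comap_subtype_map_equiv {R M N : Type*} [Ring R]
    [AddCommGroup M] [AddCommGroup N] [Module R M] [Module R N] (e : M ≃ₗ[R] N)
    (P Q : Submodule R M) :
    Nat.card (P ⧸ Q.comap P.subtype) =
      Nat.card (P.map e.toLinearMap ⧸ (Q.map e.toLinearMap).comap (P.map e.toLinearMap).subtype) := by
  refine Nat.card_congr (Submodule.Quotient.equiv _ _ (e.submoduleMap P) ?_).toEquiv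
  ext
  simp

theorem Nat.Prime.factorization_factorial_self {p : ℕ} (hp : p.Prime) :
    p.factorial.factorization p = 1 := by
  rw [Nat.factorization_factorial hp (b := 2)
    (Nat.log_lt_of_lt_pow hp.ne_zero (by nlinarith [hp.two_le]))]
  simp [Nat.div_self hp.pos]

section PermArrow

attribute [local instance] arrowAction

variable {ι : Type*} {n : ℕ}

theorem perm_smul_arrow_apply (σ : Equiv.Perm (Fin n)) (f : Fin n → ι) (i : Fin n) :
    (σ • f) i = f (σ⁻¹ i) :=
  rfl

theorem mem_fixedPoints_perm_arrow_iff {f : Fin n → ι} :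
    f ∈ fixedPoints (Equiv.Perm (Fin n)) (Fin n → ι) ↔ ∀ i j, f i = f j := by
  refine ⟨fun hf i j => ?_, fun hf σ => funext fun i => hf _ _⟩
  have := congrFun (hf (Equiv.swap i j)) i
  rw [perm_smul_arrow_apply, Equiv.swap_inv, Equiv.swap_apply_left] at this
  exact this.symm

theorem card_fixedPoints_perm_arrow (hn : 0 < n) :
    Nat.card (fixedPoints (Equiv.Perm (Fin n)) (Fin n → ι)) = Nat.card ι := by
  let const (i : ι) : fixedPoints (Equiv.Perm (Fin n)) (Fin n → ι) :=
    ⟨fun _ => i, mem_fixedPoints_perm_arrow_iff.mpr fun _ _ => rfl⟩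
  refine (Nat.card_congr (Equiv.ofBijective const ⟨?_, ?_⟩)).symm
  · intro i j h
    exact congrFun (congrArg Subtype.val h) ⟨0, hn⟩
  · intro f
    exact ⟨f.1 ⟨0, hn⟩, Subtype.ext (funext fun i => mem_fixedPoints_perm_arrow_iff.mp f.2 _ _)⟩

/-- A stabilizer of order divisible by `p` contains a `p`-cycle of `Fin p`, which is transitive. -/
theorem not_dvd_card_stabilizer_perm_arrow {p : ℕ} (hp : p.Prime) {f : Fin p → ι}
    (hf : f ∉ fixedPoints (Equiv.Perm (Fin p)) (Fin p → ι)) :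
    ¬ p ∣ Nat.card (stabilizer (Equiv.Perm (Fin p)) f) := by
  intro hdvd
  have : Fact p.Prime := ⟨hp⟩
  obtain ⟨σ, hσ⟩ := exists_prime_orderOf_dvd_card' p hdvd
  rw [← orderOf_submonoid] at hσ
  have hcycle : (σ : Equiv.Perm (Fin p)).IsCycle :=
    Equiv.Perm.isCycle_of_prime_order'' (by rwa [Fintype.card_fin]) (by rwa [Fintype.card_fin])
  have hsupport : (σ : Equiv.Perm (Fin p)).support = univ :=
    eq_univ_of_card _ (by rw [← hcycle.orderOf, hσ, Fintype.card_fin])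
  have hmoved (i : Fin p) : (σ : Equiv.Perm (Fin p)) i ≠ i := by
    simp [← Equiv.Perm.mem_support, hsupport]
  refine hf (mem_fixedPoints_perm_arrow_iff.mpr fun i j => ?_)
  obtain ⟨k, rfl⟩ := hcycle.exists_pow_eq (hmoved i) (hmoved j)
  have hfixed := congrFun ((σ ^ k).2) ((σ ^ k : Equiv.Perm (Fin p)) i)
  rw [perm_smul_arrow_apply, Subgroup.coe_pow] at hfixed
  simpa using hfixed

open scoped Classical in
theorem factorization_card_stabilizer_perm_arrow {p : ℕ} (hp : p.Prime) (f : Fin p → ι) :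
    (Nat.card (stabilizer (Equiv.Perm (Fin p)) f)).factorization p =
      if f ∈ fixedPoints (Equiv.Perm (Fin p)) (Fin p → ι) then 1 else 0 := by
  split_ifs with hf
  · rw [card_stabilizer_of_mem_fixedPoints hf, Nat.card_perm, Nat.card_fin,
      hp.factorization_factorial_self]
  · exact Nat.factorization_eq_zero_of_not_dvd (not_dvd_card_stabilizer_perm_arrow hp hf)

theorem factorization_prod_card_stabilizer_perm_arrow [Finite ι] {p : ℕ} (hp : p.Prime)
    [Fintype (orbitRel.Quotient (Equiv.Perm (Fin p)) (Fin p → ι))] :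
    (∏ ω : orbitRel.Quotient (Equiv.Perm (Fin p)) (Fin p → ι),
        Nat.card (stabilizer (Equiv.Perm (Fin p)) ω.out)).factorization p = Nat.card ι := by
  classical
  rw [Nat.factorization_prod fun ω _ => Nat.card_pos.ne', Finset.sum_apply']
  simp only [factorization_card_stabilizer_perm_arrow hp, Finset.sum_boole, Nat.cast_id]
  rw [← card_fixedPoints_perm_arrow hp.pos, ← card_orbitRel_quotient_out_mem_fixedPoints,
    Nat.card_eq_fintype_card, Fintype.card_subtype]

end PermArrow

section TensorPower

attribute [local instance] arrowAction

open Representation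

variable {R M ι : Type*} [CommRing R] [AddCommGroup M] [Module R M] (b : Module.Basis ι R M)
  (n : ℕ)

noncomputable def tensorPowerEquiv :
    PiTensorProduct R (fun _ : Fin n => M) ≃ₗ[R] R[Fin n → ι] :=
  (Basis.piTensorProduct fun _ => b).repr ≪≫ₗ (coeffLinearEquiv R).symm

theorem tensorPowerEquiv_permMap (σ : Equiv.Perm (Fin n))
    (t : PiTensorProduct R (fun _ : Fin n => M)) :
    tensorPowerEquiv b n (permMap R M n σ t) =
      ofMulAction R (Equiv.Perm (Fin n)) (Fin n → ι) σ (tensorPowerEquiv b n t) := by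
  suffices (tensorPowerEquiv b n).toLinearMap ∘ₗ permMap R M n σ =
      ofMulAction R (Equiv.Perm (Fin n)) (Fin n → ι) σ ∘ₗ (tensorPowerEquiv b n).toLinearMap from
    LinearMap.congr_fun this t
  refine (Basis.piTensorProduct fun _ => b).ext fun f => ?_
  have repr_tprod (g : Fin n → ι) : (Basis.piTensorProduct fun _ => b).repr
      (PiTensorProduct.tprod R fun i => b (g i)) = Finsupp.single g 1 := by
    rw [← Basis.piTensorProduct_apply, Module.Basis.repr_self]
  simp only [tensorPowerEquiv, permMap, LinearMap.coe_comp, LinearEquiv.coe_coe,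
    Function.comp_apply, LinearEquiv.trans_apply, Basis.piTensorProduct_apply,
    PiTensorProduct.reindex_tprod, repr_tprod]
  exact (ofMulAction_single σ f 1).symm

theorem map_symTensors_tensorPowerEquiv :
    (symTensors R M n).map (tensorPowerEquiv b n).toLinearMap =
      (ofMulAction R (Equiv.Perm (Fin n)) (Fin n → ι)).invariants := by
  ext z
  rw [Submodule.mem_map_equiv, mem_invariants]
  simp only [symTensors, Submodule.mem_iInf, LinearMap.mem_eqLocus, LinearMap.id_apply]
  refine forall_congr' fun σ => ?_
  rw [← (tensorPowerEquiv b n).injective.eq_iff, tensorPowerEquiv_permMap,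
    LinearEquiv.apply_symm_apply]

theorem map_range_symmetrize_tensorPowerEquiv :
    (LinearMap.range (symmetrize R M n)).map (tensorPowerEquiv b n).toLinearMap =
      LinearMap.range (ofMulAction R (Equiv.Perm (Fin n)) (Fin n → ι)).norm := by
  have : (tensorPowerEquiv b n).toLinearMap ∘ₗ symmetrize R M n =
      (ofMulAction R (Equiv.Perm (Fin n)) (Fin n → ι)).norm ∘ₗ
        (tensorPowerEquiv b n).toLinearMap := by
    refine LinearMap.ext fun t => ?_
    simp only [symmetrize, Representation.norm, LinearMap.comp_apply, LinearMap.sum_apply,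
      LinearEquiv.coe_coe, map_sum, tensorPowerEquiv_permMap]
  rw [← LinearMap.range_comp, this, LinearMap.range_comp_of_range_eq_top _ (LinearEquiv.range _)]

end TensorPower

section IntegralTensorPower

attribute [local instance] arrowAction

variable {M ι : Type*} [AddCommGroup M] [Module ℤ M] [Finite ι]

theorem card_symTensors_quotient_eq_prod (b : Module.Basis ι ℤ M) (n : ℕ)
    [Fintype (orbitRel.Quotient (Equiv.Perm (Fin n)) (Fin n → ι))] :
    Nat.card (↥(symTensors ℤ M n) ⧸
        (LinearMap.range (symmetrize ℤ M n)).comap (symTensors ℤ M n).subtype) =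
      ∏ ω : orbitRel.Quotient (Equiv.Perm (Fin n)) (Fin n → ι),
        Nat.card (stabilizer (Equiv.Perm (Fin n)) ω.out) := by
  rw [Submodule.card_quotient_comap_subtype_map_equiv (tensorPowerEquiv b n),
    map_symTensors_tensorPowerEquiv, map_range_symmetrize_tensorPowerEquiv,
    Representation.card_invariants_quotient_range_norm]

theorem card_symTensors_quotient_ne_zero (b : Module.Basis ι ℤ M) (n : ℕ) :
    Nat.card (↥(symTensors ℤ M n) ⧸
        (LinearMap.range (symmetrize ℤ M n)).comap (symTensors ℤ M n).subtype) ≠ 0 := by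
  have := Fintype.ofFinite (orbitRel.Quotient (Equiv.Perm (Fin n)) (Fin n → ι))
  rw [card_symTensors_quotient_eq_prod b n]
  exact Finset.prod_ne_zero_iff.mpr fun ω _ => Nat.card_pos.ne'

theorem factorization_card_symTensors_quotient (b : Module.Basis ι ℤ M) {p : ℕ}
    (hp : p.Prime) :
    (Nat.card (↥(symTensors ℤ M p) ⧸
        (LinearMap.range (symmetrize ℤ M p)).comap (symTensors ℤ M p).subtype)).factorization p =
      Nat.card ι := by
  have := Fintype.ofFinite (orbitRel.Quotient (Equiv.Perm (Fin p)) (Fin p → ι))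
  rw [card_symTensors_quotient_eq_prod b p, factorization_prod_card_stabilizer_perm_arrow hp]

end IntegralTensorPower

/-- For `M` free of rank `m` over `ℤ` and `p` prime, the highest power of `p`
dividing the index `|S'_p(M)/S''_p(M)|` is exactly `p^m`. -/
theorem stmt_14 (M : Type*) [AddCommGroup M] [Module ℤ M] (m : ℕ)
    (b : Module.Basis (Fin m) ℤ M) (p : ℕ) (hp : p.Prime) :
    p ^ m ∣
      Nat.card
        (↥(symTensors ℤ M p) ⧸
          (LinearMap.range (symmetrize ℤ M p)).comap (symTensors ℤ M p).subtype) ∧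
    ¬ p ^ (m + 1) ∣
      Nat.card
        (↥(symTensors ℤ M p) ⧸
          (LinearMap.range (symmetrize ℤ M p)).comap (symTensors ℤ M p).subtype) := by
  have hv := factorization_card_symTensors_quotient b hp
  rw [Nat.card_fin] at hv
  exact ⟨hv ▸ Nat.ordProj_dvd _ p,
    hv ▸ Nat.pow_succ_factorization_not_dvd (card_symTensors_quotient_ne_zero b p) hp⟩
end

section
/- Let p be a prime, F a field of characteristic p (e.g. 𝔽_p), and M a finite-dimensional vector space over F. Then P_p(M) = S'_p(M): the F-subspace of T^p(M) spanned by all p-th tensor powers x⊗⋯⊗x equals the space of symmetric tensors of degree p. -/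
/-!
In the coordinates of the product basis `e_g = b (g 1) ⊗ ⋯ ⊗ b (g p)`, a symmetric tensor has
`S_p`-invariant coefficients, so it is a combination of orbit sums `∑_{h ∈ S_p • g} e_h`.
Polarization (inclusion–exclusion over subsets of `{1, …, p}`) puts the full symmetrization
`∑_σ e_{g ∘ σ} = |Stab g| • ∑_{h ∈ S_p • g} e_h` into `P_p(M)`. For non-constant `g` the
stabilizer is a product of symmetric groups `S_m` with all `m < p`, so `|Stab g|` is invertible
in characteristic `p`; for constant `g` the orbit sum is itself a `p`-th power.
-/

open Finset PiTensorProduct MulAction Equiv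
open scoped TensorProduct

instance DomMulAct.instFintype {G : Type*} [Fintype G] : Fintype Gᵈᵐᵃ :=
  Fintype.ofEquiv G DomMulAct.mk

theorem MulAction.sum_smul_eq_card_stabilizer_nsmul_sum_orbit {G X N : Type*} [Group G]
    [Fintype G] [MulAction G X] [AddCommMonoid N] (f : X → N) (x : X) [Fintype (orbit G x)] :
    ∑ a : G, f (a • x) = Nat.card (stabilizer G x) • ∑ y : orbit G x, f y := by
  classical
  have hfst (a : G) : (((orbitProdStabilizerEquivGroup G x).symm a).1 : X) = a • x := by
    simp [orbitProdStabilizerEquivGroup, Subgroup.groupEquivQuotientProdSubgroup]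
  rw [Fintype.sum_equiv (orbitProdStabilizerEquivGroup G x).symm _ (fun y => f y.1)
    (fun a => by rw [hfst]), Fintype.sum_prod_type_right]
  simp [Nat.card_eq_fintype_card]

theorem Finset.sum_superset_neg_one_pow_card_compl {α R : Type*} [Fintype α] [DecidableEq α]
    [Ring R] (T : Finset α) : ∑ S with T ⊆ S, (-1 : R) ^ #Sᶜ = if T = univ then 1 else 0 := by
  have h : ∑ S with T ⊆ S, (-1 : ℤ) ^ #Sᶜ = ∑ U ∈ Tᶜ.powerset, (-1 : ℤ) ^ #U :=
    Finset.sum_nbij' compl compl (by simp) (fun U hU => by simpa [subset_compl_comm] using hU)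
      (by simp) (by simp) (by simp)
  simp only [sum_powerset_neg_one_pow_card, compl_eq_empty_iff] at h
  simpa [apply_ite] using congrArg (Int.cast : ℤ → R) h

theorem Finset.sum_filter_surjective_eq_sum_perm {α N : Type*} [Fintype α] [DecidableEq α]
    [AddCommMonoid N] (f : (α → α) → N) :
    ∑ r : α → α with r.Surjective, f r = ∑ σ : Perm α, f σ := by
  rw [Finset.sum_subtype _ (p := Function.Surjective) (fun r => by simp)]
  exact Fintype.sum_equiv ((subtypeEquivRight fun r => Finite.surjective_iff_bijective).trans
    bijectiveEquiv) _ _ (fun _ => rfl)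

section CommRing

variable {A M : Type*} [CommRing A] [AddCommGroup M] [Module A M] {n : ℕ}

theorem permMap_tprod (σ : Perm (Fin n)) (x : Fin n → M) :
    permMap A M n σ (tprod A x) = tprod A (x ∘ σ.symm) := by
  simp [permMap, Function.comp_def]

theorem mem_symTensors {z : ⨂[A] _ : Fin n, M} :
    z ∈ symTensors A M n ↔ ∀ σ, permMap A M n σ z = z := by
  simp [symTensors]

theorem tprod_const_mem_powersSubmodule (x : M) :
    tprod A (fun _ : Fin n => x) ∈ powersSubmodule A M n :=
  Submodule.subset_span ⟨x, rfl⟩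

theorem powersSubmodule_le_symTensors : powersSubmodule A M n ≤ symTensors A M n := by
  rw [powersSubmodule, Submodule.span_le]
  rintro _ ⟨x, rfl⟩
  exact mem_symTensors.mpr fun σ => by rw [permMap_tprod]; rfl

theorem tprod_const_sum_eq_sum (y : Fin n → M) (S : Finset (Fin n)) :
    tprod A (fun _ : Fin n => ∑ i ∈ S, y i) =
      ∑ r : Fin n → Fin n with univ.image r ⊆ S, tprod A (y ∘ r) := by
  classical
  rw [(tprod A (s := fun _ : Fin n => M)).map_sum_finset (fun _ => y) (fun _ => S)]
  congr 1
  ext r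
  simp [Finset.image_subset_iff]

theorem sum_tprod_comp_perm_eq_alternating_sum (y : Fin n → M) :
    ∑ σ : Perm (Fin n), tprod A (y ∘ σ) =
      ∑ S : Finset (Fin n), (-1 : A) ^ #Sᶜ • tprod A (fun _ : Fin n => ∑ i ∈ S, y i) := by
  classical
  calc ∑ σ : Perm (Fin n), tprod A (y ∘ σ)
      = ∑ r : Fin n → Fin n with r.Surjective, tprod A (y ∘ r) :=
        (sum_filter_surjective_eq_sum_perm fun r => tprod A (y ∘ r)).symm
    _ = ∑ r : Fin n → Fin n, (if univ.image r = univ then 1 else 0 : A) • tprod A (y ∘ r) := by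
        rw [sum_filter]
        refine sum_congr rfl fun r _ => ?_
        have : univ.image r = univ ↔ r.Surjective := by
          simp [Finset.eq_univ_iff_forall, Function.Surjective]
        simp only [this, ite_smul, one_smul, zero_smul]
    _ = ∑ r : Fin n → Fin n, ∑ S : Finset (Fin n),
          (if univ.image r ⊆ S then (-1 : A) ^ #Sᶜ else 0) • tprod A (y ∘ r) := by
        simp_rw [← sum_smul, ← sum_filter, sum_superset_neg_one_pow_card_compl]
    _ = _ := by
        rw [sum_comm]
        refine sum_congr rfl fun S _ => ?_
        rw [tprod_const_sum_eq_sum, sum_filter, Finset.smul_sum]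
        simp only [ite_smul, zero_smul, smul_ite, smul_zero]

theorem sum_tprod_comp_perm_mem_powersSubmodule (y : Fin n → M) :
    ∑ σ : Perm (Fin n), tprod A (y ∘ σ) ∈ powersSubmodule A M n := by
  rw [sum_tprod_comp_perm_eq_alternating_sum]
  exact Submodule.sum_mem _ fun S _ =>
    Submodule.smul_of_tower_mem _ _ (tprod_const_mem_powersSubmodule _)

variable {ι : Type*} (b : Module.Basis ι A M)

theorem Module.Basis.piTensorProduct_repr_permMap (σ : Perm (Fin n)) (z : ⨂[A] _ : Fin n, M)
    (g : Fin n → ι) :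
    (Basis.piTensorProduct fun _ => b).repr (permMap A M n σ z) g =
      (Basis.piTensorProduct fun _ => b).repr z (g ∘ σ) := by
  suffices ((Basis.piTensorProduct fun _ => b).coord g).comp (permMap A M n σ) =
      (Basis.piTensorProduct fun _ => b).coord (g ∘ σ) from LinearMap.congr_fun this z
  refine PiTensorProduct.ext (MultilinearMap.ext fun x => ?_)
  simp only [LinearMap.compMultilinearMap_apply, LinearMap.comp_apply, permMap_tprod,
    Basis.coord_apply, Basis.piTensorProduct_repr_tprod_apply]
  exact (Equiv.prod_comp σ _).symm.trans (by simp)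

theorem Module.Basis.piTensorProduct_repr_comp_perm {z : ⨂[A] _ : Fin n, M}
    (hz : z ∈ symTensors A M n) (σ : Perm (Fin n)) (g : Fin n → ι) :
    (Basis.piTensorProduct fun _ => b).repr z (g ∘ σ) =
      (Basis.piTensorProduct fun _ => b).repr z g := by
  rw [← b.piTensorProduct_repr_permMap, mem_symTensors.mp hz σ]

end CommRing

theorem not_dvd_card_stabilizer_of_ne_const {p : ℕ} (hp : p.Prime) {ι : Type*} {g : Fin p → ι}
    (hg : ∀ c, g ≠ fun _ => c) : ¬ p ∣ Nat.card (stabilizer (Perm (Fin p))ᵈᵐᵃ g) := by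
  classical
  have hcard : Nat.card (stabilizer (Perm (Fin p))ᵈᵐᵃ g) =
      Fintype.card {σ : Perm (Fin p) // g ∘ σ = g} :=
    (Nat.card_congr (DomMulAct.mk.subtypeEquiv fun _ => Iff.rfl).symm).trans
      Nat.card_eq_fintype_card
  rw [hcard, DomMulAct.stabilizer_card', hp.prime.dvd_finsetProd_iff]
  rintro ⟨c, -, hdvd⟩
  obtain ⟨i, hi⟩ : ∃ i, g i ≠ c := not_forall.mp fun h => hg c (funext h)
  have hlt : Fintype.card {a // g a = c} < p := by
    simpa using Fintype.card_subtype_lt (p := fun a => g a = c) hi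
  exact absurd ((hp.dvd_factorial).mp hdvd) (not_le.mpr hlt)

section CharP

variable {F M : Type*} [Field F] [AddCommGroup M] [Module F M] {p : ℕ}

theorem sum_orbit_tprod_mem_powersSubmodule (hp : p.Prime) [CharP F p] {ι : Type*} (v : ι → M)
    (g : Fin p → ι) [Fintype (orbit (Perm (Fin p))ᵈᵐᵃ g)] :
    ∑ h : orbit (Perm (Fin p))ᵈᵐᵃ g, tprod F (v ∘ (h : Fin p → ι)) ∈ powersSubmodule F M p := by
  by_cases hg : ∃ c, g = fun _ => c
  · obtain ⟨c, rfl⟩ := hg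
    have : Subsingleton (orbit (Perm (Fin p))ᵈᵐᵃ fun _ : Fin p => c) :=
      ⟨fun ⟨_, _, rfl⟩ ⟨_, _, rfl⟩ => rfl⟩
    rw [Fintype.sum_subsingleton _ ⟨_, mem_orbit_self _⟩]
    exact tprod_const_mem_powersSubmodule (v c)
  · have hstab : (Nat.card (stabilizer (Perm (Fin p))ᵈᵐᵃ g) : F) ≠ 0 := by
      rw [Ne, CharP.cast_eq_zero_iff F p]
      exact not_dvd_card_stabilizer_of_ne_const hp (not_exists.mp hg)
    have hsum := sum_smul_eq_card_stabilizer_nsmul_sum_orbit (G := (Perm (Fin p))ᵈᵐᵃ)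
      (fun h => tprod F (v ∘ h)) g
    rw [← Nat.cast_smul_eq_nsmul F,
      ← DomMulAct.mk.sum_comp fun a : (Perm (Fin p))ᵈᵐᵃ => tprod F (v ∘ (a • g))] at hsum
    rw [← inv_smul_smul₀ hstab (∑ h : orbit _ g, _), ← hsum]
    exact Submodule.smul_mem _ _ (sum_tprod_comp_perm_mem_powersSubmodule (v ∘ g))

theorem symTensors_le_powersSubmodule (hp : p.Prime) [CharP F p] [FiniteDimensional F M] :
    symTensors F M p ≤ powersSubmodule F M p := by
  classical
  intro z hz
  let b := Module.finBasis F M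
  let B := Basis.piTensorProduct fun _ : Fin p => b
  let G := (Perm (Fin p))ᵈᵐᵃ
  have hconst (g : Fin p → Fin (Module.finrank F M)) (h : orbit G g) :
      B.repr z h = B.repr z g := by
    obtain ⟨_, a, rfl⟩ := h
    exact b.piTensorProduct_repr_comp_perm hz _ g
  rw [← B.sum_repr z, ← (selfEquivSigmaOrbits G _).symm.sum_comp, Fintype.sum_sigma]
  refine Submodule.sum_mem _ fun ω _ => ?_
  have hsymm (y : orbit G ω.out) : (selfEquivSigmaOrbits G _).symm ⟨ω, y⟩ = y := rfl
  simp only [hsymm, hconst, ← smul_sum]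
  refine Submodule.smul_mem _ _ ?_
  simpa only [B, Basis.piTensorProduct_apply, Function.comp_def] using
    sum_orbit_tprod_mem_powersSubmodule hp b ω.out

end CharP

/-- Over a field `F` of characteristic `p` (prime) and a finite-dimensional
`F`-vector space `M`, `P_p(M) = S'_p(M)`: the span of the `p`-th tensor powers
equals the space of symmetric tensors of degree `p`. -/
theorem stmt_17 (F : Type*) [Field F] (p : ℕ) (hp : p.Prime) [CharP F p]
    (M : Type*) [AddCommGroup M] [Module F M] [FiniteDimensional F M] :
    powersSubmodule F M p = symTensors F M p :=
  powersSubmodule_le_symTensors.antisymm (symTensors_le_powersSubmodule hp)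
end
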